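/- Let q ≥ 2 be any integer and let f : ℤ_q² → ℤ_{2q} be defined by f(x_1, x_2) = 2x̂_1x̂_2 + x̂_1 (the integer value reduced modulo 2q). Then for every u = (u_1, u_2) ∈ ℤ_q², the 2q-nega-Hadamard transform of f satisfies N_f(u) = ω^{(2û_2+1)(q−û_1−1)}. -/
import Mathlib


open Finset

/-- `ω = e^{πi/q}`, a primitive `2q`-th root of unity. -/
noncomputable def omg (q : ℕ) : ℂ := Complex.exp ((Real.pi : ℂ) * Complex.I / q)

/-- `ξ = e^{2πi/q}`, a primitive `q`-th root of unity. -/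
noncomputable def xiq (q : ℕ) : ℂ := Complex.exp (2 * (Real.pi : ℂ) * Complex.I / q)

/-- The `2q`-nega-Hadamard transform of `f : ℤ_q^n → ℤ_{2q}` at `u ∈ ℤ_q^n`:
`N_f(u) = q^{-n/2} Σ_x ω^{f(x)} ξ^{⟨x̂,û⟩} ω^{Σ_i x̂_i}`. -/
noncomputable def NHT (q n : ℕ) [NeZero q] (f : (Fin n → ZMod q) → ZMod (2 * q))
    (u : Fin n → ZMod q) : ℂ :=
  (Real.sqrt ((q : ℝ) ^ n) : ℂ)⁻¹ *
    ∑ x : Fin n → ZMod q,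
      omg q ^ (f x).val * xiq q ^ (∑ i, (x i).val * (u i).val) * omg q ^ (∑ i, (x i).val)

/-- The `2q`-nega-crosscorrelation of `f, g : ℤ_q^m → ℤ_{2q}` at `u`:
`C_{f,g}(u) = Σ_x ω^{f(x) − g(x+u)} (−1)^{n_q(x̂,û)}`. -/
noncomputable def negaCC (q m : ℕ) [NeZero q]
    (f g : (Fin m → ZMod q) → ZMod (2 * q)) (u : Fin m → ZMod q) : ℂ :=
  ∑ x : Fin m → ZMod q,
    omg q ^ (f x - g (x + u)).val *
      (-1 : ℂ) ^ (Finset.univ.filter (fun i => q ≤ (x i).val + (u i).val)).card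

lemma omg_pow_2q (q : ℕ) [NeZero q] : omg q ^ (2 * q) = 1 := by
  rw [omg, ← Complex.exp_nat_mul]
  have hq : (q : ℂ) ≠ 0 := Nat.cast_ne_zero.mpr (NeZero.ne q)
  rw [show ((2 * q : ℕ) : ℂ) * ((Real.pi : ℂ) * Complex.I / q)
      = 2 * Real.pi * Complex.I from by push_cast; field_simp]
  exact Complex.exp_two_pi_mul_I

lemma omg_pow_mod (q : ℕ) [NeZero q] (n : ℕ) : omg q ^ (n % (2 * q)) = omg q ^ n := by
  conv_rhs => rw [← Nat.div_add_mod n (2 * q)]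
  rw [pow_add, pow_mul, omg_pow_2q, one_pow, one_mul]

lemma xiq_eq (q : ℕ) : xiq q = omg q ^ 2 := by
  rw [omg, xiq, ← Complex.exp_nat_mul]
  ring_nf

lemma sum_zmod (q : ℕ) [NeZero q] (g : ℕ → ℂ) :
    ∑ x : ZMod q, g x.val = ∑ k ∈ range q, g k := by
  apply Finset.sum_nbij' (fun x => ZMod.val x) (fun k => (k : ZMod q))
  · intro a _; simpa using ZMod.val_lt a
  · intro k _; simp
  · intro a _; simp [ZMod.natCast_zmod_val]
  · intro k hk; simp [ZMod.val_cast_of_lt (mem_range.mp hk)]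
  · intro a _; rfl

lemma geom_zmod (q : ℕ) [NeZero q] (z : ℂ) (hz : z ^ q = 1) :
    ∑ x : ZMod q, z ^ x.val = if z = 1 then (q : ℂ) else 0 := by
  rw [sum_zmod]
  split_ifs with h
  · simp [h]
  · rw [geom_sum_eq h, hz, sub_self, zero_div]

lemma omg_sq_eq_one_iff (q : ℕ) [NeZero q] (m : ℕ) :
    omg q ^ (2 * m) = 1 ↔ q ∣ m := by
  have hprim := Complex.isPrimitiveRoot_exp q (NeZero.ne q)
  have hx : omg q ^ (2 * m) = xiq q ^ m := by
    rw [pow_mul, ← xiq_eq]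
  rw [hx, xiq]
  exact hprim.pow_eq_one_iff_dvd m

/-- For any `q ≥ 2` and `f(x₁,x₂) = 2x̂₁x̂₂ + x̂₁ (mod 2q)` on `ℤ_q²`,
the `2q`-nega-Hadamard transform satisfies `N_f(u) = ω^{(2û₂+1)(q−û₁−1)}`. -/
theorem bivariate_nht (q : ℕ) [NeZero q] (hq : 2 ≤ q) (u : Fin 2 → ZMod q) :
    NHT q 2 (fun x => ((2 * (x 0).val * (x 1).val + (x 0).val : ℕ) : ZMod (2 * q))) u
      = omg q ^ ((2 * (u 1).val + 1) * (q - (u 0).val - 1)) := by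
  have hu0 : (u 0).val < q := ZMod.val_lt _
  have hu1 : (u 1).val < q := ZMod.val_lt _
  have hqC : (q : ℂ) ≠ 0 := Nat.cast_ne_zero.mpr (NeZero.ne q)
  set v0 := (u 0).val with hv0
  set v1 := (u 1).val with hv1
  set b₀ : ZMod q := ((q - v0 - 1 : ℕ) : ZMod q) with hb₀
  have hb₀val : b₀.val = q - v0 - 1 := ZMod.val_cast_of_lt (by omega)
  -- per-term rewriting
  have hterm : ∀ a b : ZMod q,
      omg q ^ (((2 * a.val * b.val + a.val : ℕ) : ZMod (2 * q))).val *
        xiq q ^ (a.val * v0 + b.val * v1) * omg q ^ (a.val + b.val)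
      = omg q ^ (b.val * (2 * v1 + 1)) * (omg q ^ (2 * (b.val + v0 + 1))) ^ a.val := by
    intro a b
    rw [ZMod.val_natCast, omg_pow_mod, xiq_eq]
    rw [← pow_mul, ← pow_mul, ← pow_add, ← pow_add, ← pow_add]
    congr 1; ring
  -- the inner geometric sum
  have hinner : ∀ b : ZMod q,
      ∑ a : ZMod q, (omg q ^ (2 * (b.val + v0 + 1))) ^ a.val
        = if b = b₀ then (q : ℂ) else 0 := by
    intro b
    have hbq : (omg q ^ (2 * (b.val + v0 + 1))) ^ q = 1 := by
      rw [← pow_mul, show 2 * (b.val + v0 + 1) * q = 2 * q * (b.val + v0 + 1) from by ring,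
        pow_mul, omg_pow_2q, one_pow]
    rw [geom_zmod q _ hbq]
    have hb : b.val < q := ZMod.val_lt _
    have hiff : (omg q ^ (2 * (b.val + v0 + 1)) = 1) ↔ b = b₀ := by
      rw [omg_sq_eq_one_iff]
      constructor
      · rintro ⟨c, hc⟩
        have hc1 : c = 1 := by
          rcases Nat.lt_or_ge c 1 with h | h
          · exfalso
            have hc0 : c = 0 := by omega
            rw [hc0, mul_zero] at hc
            omega
          rcases Nat.lt_or_ge c 2 with h' | h'
          · omega
          · exfalso
            have h2q : 2 * q ≤ q * c := by
              calc 2 * q = q * 2 := by ring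
                _ ≤ q * c := Nat.mul_le_mul_left q h'
            omega
        rw [hc1, mul_one] at hc
        have hbv : b.val = q - v0 - 1 := by omega
        exact ZMod.val_injective q (by rw [hbv, hb₀val])
      · intro hbe
        refine ⟨1, ?_⟩
        rw [hbe, hb₀val, mul_one]; omega
    simp only [hiff]
  -- compute the big sum
  have e1 : (∑ x : Fin 2 → ZMod q,
      omg q ^ ((((2 * (x 0).val * (x 1).val + (x 0).val : ℕ)) : ZMod (2 * q)).val) *
        xiq q ^ (∑ i, (x i).val * (u i).val) * omg q ^ (∑ i, (x i).val))
      = (q : ℂ) * omg q ^ ((q - v0 - 1) * (2 * v1 + 1)) := by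
    rw [← Equiv.sum_comp (finTwoArrowEquiv (ZMod q)).symm]
    have e2 : ∀ p : ZMod q × ZMod q,
        (fun x : Fin 2 → ZMod q =>
          omg q ^ ((((2 * (x 0).val * (x 1).val + (x 0).val : ℕ)) : ZMod (2 * q)).val) *
            xiq q ^ (∑ i, (x i).val * (u i).val) * omg q ^ (∑ i, (x i).val))
          ((finTwoArrowEquiv (ZMod q)).symm p)
        = omg q ^ (p.2.val * (2 * v1 + 1)) * (omg q ^ (2 * (p.2.val + v0 + 1))) ^ p.1.val := by
      intro p
      simp only [finTwoArrowEquiv_symm_apply, Matrix.cons_val_zero, Matrix.cons_val_one,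
        Matrix.head_cons, Fin.sum_univ_two]
      exact hterm p.1 p.2
    rw [Finset.sum_congr rfl fun p _ => e2 p, Fintype.sum_prod_type_right]
    have e3 : ∀ b : ZMod q,
        (∑ a : ZMod q, omg q ^ (b.val * (2 * v1 + 1)) * (omg q ^ (2 * (b.val + v0 + 1))) ^ a.val)
        = if b = b₀ then omg q ^ (b.val * (2 * v1 + 1)) * q else 0 := by
      intro b
      rw [← Finset.mul_sum, hinner b, mul_ite, mul_zero]
    rw [Finset.sum_congr rfl fun b _ => e3 b, Finset.sum_ite_eq' univ b₀]
    simp only [mem_univ, if_true, hb₀val]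
    ring
  unfold NHT
  simp only []
  rw [e1]
  have hsq : Real.sqrt ((q : ℝ) ^ 2) = (q : ℝ) := Real.sqrt_sq (by positivity)
  rw [hsq]
  push_cast
  rw [mul_comm ((q : ℂ)) _, ← mul_assoc, mul_comm ((q : ℂ))⁻¹ _, mul_assoc,
    inv_mul_cancel₀ hqC, mul_one, mul_comm (q - v0 - 1) (2 * v1 + 1)]
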